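/- For every three-module one-trit classical sequential processor with output O : {0,1}^6 → {-1,1}, the number of errors of O with respect to the target function T3, namely the cardinality of {x ∈ {0,1}^6 : T3(x) ≠ 0 and O(x) ≠ T3(x)}, is at least 2. -/

import Mathlib

/-- Domain of six input bits. -/
abbrev Bits6 := Fin 2 × Fin 2 × Fin 2 × Fin 2 × Fin 2 × Fin 2

/-- The 4×16 matrix defining the target function of the three-module single-qutrit
processor. -/
def M3 : Fin 4 → Fin 16 → ℤ :=
  ![![ 0,  0, -1,  1,  0,  0,  1, -1, -1,  1,  0,  0,  1, -1,  0,  0],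
    ![ 0,  0,  1, -1,  0,  0, -1,  1,  1, -1,  0,  0, -1,  1,  0,  0],
    ![-1,  1,  0,  0,  1, -1,  0,  0,  0,  0,  1, -1,  0,  0, -1,  1],
    ![ 1, -1,  0,  0, -1,  1,  0,  0,  0,  0, -1,  1,  0,  0,  1, -1]]

/-- Row index `2*X1 + X2`. -/
def row4 (x1 x2 : Fin 2) : Fin 4 := ⟨2 * x1.val + x2.val, by omega⟩

/-- Column index `8*X3 + 4*X4 + 2*X5 + X6`. -/
def col16 (x3 x4 x5 x6 : Fin 2) : Fin 16 :=
  ⟨8 * x3.val + 4 * x4.val + 2 * x5.val + x6.val, by omega⟩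

/-- The target function `T3 : {0,1}^6 → {-1,0,1}`. -/
def T3 : Bits6 → ℤ
  | (x1, x2, x3, x4, x5, x6) => M3 (row4 x1 x2) (col16 x3 x4 x5 x6)

/-- Output of a three-module one-trit classical sequential processor given by the
module strategies `g1`, `g2`, `g3`. -/
def output3trit (g1 : Fin 2 × Fin 2 → Fin 3) (g2 : Fin 3 → Fin 2 × Fin 2 → Fin 3)
    (g3 : Fin 3 → Fin 2 × Fin 2 → ℤ) : Bits6 → ℤ
  | (x1, x2, x3, x4, x5, x6) => g3 (g2 (g1 (x1, x2)) (x3, x4)) (x5, x6)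

set_option maxHeartbeats 4000000 in
lemma L3 : ∀ (ra rb : Fin 4) (pa pb : Fin 2 × Fin 2) (hb : Fin 2 × Fin 2 → Bool),
    ra ≠ rb → pa ≠ pb →
    2 ≤ (Finset.univ.filter (fun z : Bool × Bool × Fin 2 × Fin 2 =>
      M3 (if z.1 then ra else rb)
        (col16 (if z.2.1 then pa else pb).1 (if z.2.1 then pa else pb).2 z.2.2.1 z.2.2.2) ≠ 0 ∧
      (if hb z.2.2 then (1:ℤ) else -1) ≠
        M3 (if z.1 then ra else rb)
          (col16 (if z.2.1 then pa else pb).1 (if z.2.1 then pa else pb).2 z.2.2.1 z.2.2.2))).card := by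
  decide

lemma ite_inj {α : Type*} {a b : α} (h : a ≠ b) {x y : Bool}
    (e : (if x then a else b) = (if y then a else b)) : x = y := by
  cases x <;> cases y <;> simp_all

lemma row4_inj : ∀ a b : Fin 2 × Fin 2, a ≠ b → row4 a.1 a.2 ≠ row4 b.1 b.2 := by decide

/-- every three-module one-trit classical sequential processor makes at
least 2 errors on the nonzero part of the target `T3`. -/
theorem stmt7 (g1 : Fin 2 × Fin 2 → Fin 3) (g2 : Fin 3 → Fin 2 × Fin 2 → Fin 3)
    (g3 : Fin 3 → Fin 2 × Fin 2 → ℤ)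
    (hg3 : ∀ s p, g3 s p = -1 ∨ g3 s p = 1) :
    2 ≤ (Finset.univ.filter
      (fun x : Bits6 => T3 x ≠ 0 ∧ output3trit g1 g2 g3 x ≠ T3 x)).card := by
  obtain ⟨a, b, hab, hg⟩ : ∃ a b : Fin 2 × Fin 2, a ≠ b ∧ g1 a = g1 b :=
    Fintype.exists_ne_map_eq_of_card_lt g1 (by simp)
  obtain ⟨pa, pb, hpab, hc⟩ : ∃ pa pb : Fin 2 × Fin 2, pa ≠ pb ∧
      g2 (g1 a) pa = g2 (g1 a) pb :=
    Fintype.exists_ne_map_eq_of_card_lt (g2 (g1 a)) (by simp)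
  set s : Fin 3 := g2 (g1 a) pa with hs
  set hb : Fin 2 × Fin 2 → Bool := fun q => decide (g3 s q = 1) with hhb
  have hval : ∀ q, g3 s q = (if hb q then (1:ℤ) else -1) := by
    intro q
    rcases hg3 s q with h | h <;> simp [hhb, h]
  have key := L3 (row4 a.1 a.2) (row4 b.1 b.2) pa pb hb (row4_inj a b hab) hpab
  refine le_trans key (Finset.card_le_card_of_injOn
    (fun z => ((if z.1 then a else b).1, (if z.1 then a else b).2,
      (if z.2.1 then pa else pb).1, (if z.2.1 then pa else pb).2, z.2.2.1, z.2.2.2))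
    ?_ ?_)
  · rintro ⟨z1, z2, q⟩ hz
    simp only [Finset.mem_coe, Finset.mem_filter, Finset.mem_univ, true_and] at hz ⊢
    have hT : T3 ((if z1 then a else b).1, (if z1 then a else b).2,
        (if z2 then pa else pb).1, (if z2 then pa else pb).2, q.1, q.2) =
        M3 (if z1 then row4 a.1 a.2 else row4 b.1 b.2)
          (col16 (if z2 then pa else pb).1 (if z2 then pa else pb).2 q.1 q.2) := by
      cases z1 <;> rfl
    have hO : output3trit g1 g2 g3 ((if z1 then a else b).1, (if z1 then a else b).2,
        (if z2 then pa else pb).1, (if z2 then pa else pb).2, q.1, q.2) =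
        (if hb q then (1:ℤ) else -1) := by
      show g3 (g2 (g1 ((if z1 then a else b).1, (if z1 then a else b).2))
        ((if z2 then pa else pb).1, (if z2 then pa else pb).2)) (q.1, q.2) = _
      have h1 : g1 ((if z1 then a else b).1, (if z1 then a else b).2) = g1 a := by
        cases z1 <;> simp [hg]
      rw [h1]
      have h2 : g2 (g1 a) ((if z2 then pa else pb).1, (if z2 then pa else pb).2) = s := by
        cases z2
        · exact hc.symm
        · rfl
      rw [h2]
      exact hval q
    rw [hT, hO]
    exact hz
  · intro z hz z' hz' h
    simp only [Prod.mk.injEq] at h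
    obtain ⟨h1, h2, h3, h4, h5, h6⟩ := h
    have e1 : (if z.1 then a else b) = (if z'.1 then a else b) := Prod.ext h1 h2
    have e2 : (if z.2.1 then pa else pb) = (if z'.2.1 then pa else pb) := Prod.ext h3 h4
    have b1 : z.1 = z'.1 := ite_inj hab e1
    have b2 : z.2.1 = z'.2.1 := ite_inj hpab e2
    exact Prod.ext b1 (Prod.ext b2 (Prod.ext h5 h6))
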